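/- arXiv:1903.12289 — 2 statements merged into one kernel-verified Lean document; each statement's English description precedes it below -/
import Mathlib

section
/- Fix W, E, T₀, ρ > 0, Δ > 0 and a sampling period T_s with 0 < T_s < 1/(2W). If two signals x, y ∈ C_{W,E,T₀,ρ} satisfy [x(nT_s)]* = [y(nT_s)]* for every n ∈ ℤ (modulo reduction applied to each sample), then x(t) = y(t) for all t ∈ ℝ. In other words, every signal in C_{W,E,T₀,ρ} is uniquely determined by (and hence perfectly recoverable from) its modulo-Δ-reduced samples taken at any rate above the Nyquist rate. -/
/-!
Modulo equality of the samples puts every difference `x (n Ts) - y (n Ts)` in the lattice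
`Δ (ℤ + iℤ)`; the decay of `x` and `y` makes these differences smaller than `Δ` for all but
finitely many `n`, so all but finitely many samples of `z = x - y` vanish. Cut the spectrum `Z`
of `z` out of the band `(-W, W]` and wrap it around the circle of circumference `1 / Ts > 2W`:
its Fourier coefficients are `Ts • z (-n Ts)`, so it is a trigonometric polynomial almost
everywhere. It also vanishes on the arc `(W, 1 / (2 Ts))` left free by the oversampling, and a
trigonometric polynomial is real analytic, so it vanishes identically. Hence `Z = 0` on the band
and `z = 0`.
-/

open MeasureTheory Real

/-- Modulo reduction: the unique element of `[-Δ/2, Δ/2)` congruent to `x` modulo `Δ`. -/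
noncomputable def modStar (Δ x : ℝ) : ℝ := Δ * Int.fract ((x + Δ / 2) / Δ) - Δ / 2

/-- Modulo reduction of a complex number: real and imaginary parts are reduced separately. -/
noncomputable def cmodStar (Δ : ℝ) (z : ℂ) : ℂ :=
  (modStar Δ z.re : ℂ) + (modStar Δ z.im : ℂ) * Complex.I

/-- The class `C_{W,E,T₀,ρ}` of finite-energy bandlimited signals with decaying tails. -/
def signalClass (W E T₀ ρ : ℝ) : Set (ℝ → ℂ) :=
  {x | ∃ X : ℝ → ℂ, MemLp X 2 volume ∧
    (∀ t : ℝ, x t = ∫ f in (-W)..W, X f * Complex.exp (2 * Real.pi * Complex.I * f * t)) ∧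
    (∫ t : ℝ, ‖x t‖ ^ 2) ≤ E ∧
    ∀ t : ℝ, T₀ ≤ |t| → ‖x t‖ ≤ |t| ^ (-ρ)}

open Filter Topology Set AddCircle

theorem eq_of_modStar_eq_of_abs_sub_lt {Δ a b : ℝ} (hΔ : 0 < Δ)
    (h : modStar Δ a = modStar Δ b) (hab : |a - b| < Δ) : a = b := by
  have hfract : Int.fract ((a + Δ / 2) / Δ) = Int.fract ((b + Δ / 2) / Δ) := by
    unfold modStar at h
    exact mul_left_cancel₀ hΔ.ne' (by linarith)
  obtain ⟨k, hk⟩ := Int.fract_eq_fract.mp hfract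
  have hk' : (a - b) / Δ = k := by rw [← hk]; ring
  have : |(k : ℝ)| < 1 := by
    rwa [← hk', abs_div, abs_of_pos hΔ, div_lt_one hΔ]
  have hk0 : k = 0 := by exact_mod_cast Int.abs_lt_one_iff.mp (by exact_mod_cast this)
  rw [hk0, Int.cast_zero, div_eq_zero_iff] at hk'
  exact sub_eq_zero.mp (hk'.resolve_right hΔ.ne')

@[simp] theorem cmodStar_re (Δ : ℝ) (z : ℂ) : (cmodStar Δ z).re = modStar Δ z.re := by
  simp [cmodStar]

@[simp] theorem cmodStar_im (Δ : ℝ) (z : ℂ) : (cmodStar Δ z).im = modStar Δ z.im := by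
  simp [cmodStar]

theorem eq_of_cmodStar_eq_of_norm_sub_lt {Δ : ℝ} {z w : ℂ} (hΔ : 0 < Δ)
    (h : cmodStar Δ z = cmodStar Δ w) (hzw : ‖z - w‖ < Δ) : z = w := by
  apply Complex.ext
  · refine eq_of_modStar_eq_of_abs_sub_lt hΔ (by simpa using congrArg Complex.re h) ?_
    exact (Complex.abs_re_le_norm (z - w)).trans_lt hzw
  · refine eq_of_modStar_eq_of_abs_sub_lt hΔ (by simpa using congrArg Complex.im h) ?_
    exact (Complex.abs_im_le_norm (z - w)).trans_lt hzw

theorem tendsto_cocompact_of_norm_le_rpow_neg {x : ℝ → ℂ} {T₀ ρ : ℝ} (hρ : 0 < ρ)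
    (hx : ∀ t : ℝ, T₀ ≤ |t| → ‖x t‖ ≤ |t| ^ (-ρ)) : Tendsto x (cocompact ℝ) (𝓝 0) := by
  have habs : Tendsto (fun t : ℝ => |t|) (cocompact ℝ) atTop := tendsto_norm_cocompact_atTop
  refine squeeze_zero_norm' ?_ ((tendsto_rpow_neg_atTop hρ).comp habs)
  filter_upwards [habs.eventually_ge_atTop T₀] with t ht using hx t ht

theorem tendsto_intCast_mul_cofinite_cocompact {Ts : ℝ} (hTs : Ts ≠ 0) :
    Tendsto (fun n : ℤ => (n : ℝ) * Ts) cofinite (cocompact ℝ) :=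
  (tendsto_cocompact_mul_right₀ hTs).comp Int.tendsto_coe_cofinite

noncomputable def bandlimitedSignal (W : ℝ) (X : ℝ → ℂ) (t : ℝ) : ℂ :=
  ∫ f in (-W)..W, X f * Complex.exp (2 * π * Complex.I * f * t)

theorem bandlimitedSignal_sub {W : ℝ} {X Y : ℝ → ℂ} (hX : IntervalIntegrable X volume (-W) W)
    (hY : IntervalIntegrable Y volume (-W) W) (t : ℝ) :
    bandlimitedSignal W (X - Y) t = bandlimitedSignal W X t - bandlimitedSignal W Y t := by
  have hexp : ContinuousOn (fun f : ℝ => Complex.exp (2 * π * Complex.I * f * t)) (uIcc (-W) W) :=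
    Continuous.continuousOn (by fun_prop)
  simp only [bandlimitedSignal, Pi.sub_apply, sub_mul]
  exact intervalIntegral.integral_sub (hX.mul_continuousOn hexp) (hY.mul_continuousOn hexp)

section Circle

variable {T : ℝ}

theorem analyticAt_fourier_coe (n : ℤ) (x : ℝ) :
    AnalyticAt ℝ (fun y : ℝ => fourier n (y : AddCircle T)) x := by
  simp_rw [fourier_coe_apply]
  have hF : AnalyticAt ℂ (fun w : ℂ => Complex.exp (2 * π * Complex.I * n * w / T)) x := by
    fun_prop
  exact hF.restrictScalars.comp (Complex.ofRealCLM.analyticAt x)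

theorem sum_smul_fourier_eq_zero_of_forall_Ioo {c : ℤ → ℂ} {s : Finset ℤ} {u v : ℝ}
    (huv : u < v) (h : ∀ x ∈ Ioo u v, (∑ n ∈ s, c n • fourier n) (x : AddCircle T) = 0) :
    ∑ n ∈ s, c n • fourier (T := T) n = 0 := by
  set P := ∑ n ∈ s, c n • fourier (T := T) n
  have han : AnalyticOnNhd ℝ (fun x : ℝ => P x) univ := fun x _ => by
    simp only [P, ContinuousMap.coe_sum, ContinuousMap.coe_smul, Finset.sum_apply, Pi.smul_apply,
      smul_eq_mul]
    exact Finset.analyticAt_fun_sum _ fun n _ => analyticAt_const.mul (analyticAt_fourier_coe n x)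
  have hnhds : (fun x : ℝ => P x) =ᶠ[𝓝 ((u + v) / 2)] 0 :=
    eventually_of_mem (Ioo_mem_nhds (by linarith) (by linarith)) h
  have hzero := han.eqOn_zero_of_preconnected_of_eventuallyEq_zero isPreconnected_univ
    (mem_univ _) hnhds
  ext x
  induction x using QuotientAddGroup.induction_on with
  | H x => exact hzero (mem_univ x)

variable [hT : Fact (0 < T)]

theorem ae_restrict_Ioc_of_ae_haarAddCircle {p : AddCircle T → Prop}
    (h : ∀ᵐ x ∂haarAddCircle, p x) (a : ℝ) :
    ∀ᵐ t : ℝ ∂volume.restrict (Ioc a (a + T)), p t := by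
  have : ∀ᵐ x ∂(volume : Measure (AddCircle T)), p x := by
    rw [volume_eq_smul_haarAddCircle]; exact Measure.ae_smul_measure h _
  exact (AddCircle.measurePreserving_mk T a).quasiMeasurePreserving.ae this

theorem ae_eq_sum_fourier_of_fourierCoeff_eq_zero {g : AddCircle T → ℂ}
    (hg : MemLp g 2 haarAddCircle) {s : Finset ℤ} (hs : ∀ n ∉ s, fourierCoeff g n = 0) :
    g =ᵐ[haarAddCircle] ⇑(∑ n ∈ s, fourierCoeff g n • fourier n) := by
  have hsum := hasSum_fourier_series_L2 (hg.toLp g)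
  rw [fourierCoeff_congr_ae hg.coeFn_toLp] at hsum
  have hfin : hg.toLp g = ContinuousMap.toLp 2 haarAddCircle ℂ
      (∑ n ∈ s, fourierCoeff g n • fourier n) := by
    rw [map_sum]
    simp_rw [map_smul]
    exact hsum.unique (hasSum_sum_of_ne_finset_zero fun n hn => by simp [hs n hn])
  refine hg.coeFn_toLp.symm.trans ?_
  rw [hfin]
  exact ContinuousMap.coeFn_toLp (𝕜 := ℂ) haarAddCircle _

theorem ae_eq_zero_of_finite_fourierCoeff_of_forall_Ioo {g : AddCircle T → ℂ}
    (hg : MemLp g 2 haarAddCircle) (hfin : (fourierCoeff g).support.Finite) {u v : ℝ}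
    (huv : u < v) (h : ∀ x ∈ Ioo u v, g x = 0) : g =ᵐ[haarAddCircle] 0 := by
  have hP := ae_eq_sum_fourier_of_fourierCoeff_eq_zero hg (s := hfin.toFinset)
    fun n hn => by simpa using hn
  set P := ∑ n ∈ hfin.toFinset, fourierCoeff g n • fourier n
  suffices P = 0 by simpa [this] using hP
  set v' := min v (u + T)
  have hsub : Ioo u v' ⊆ Ioc u (u + T) := fun x hx => ⟨hx.1, hx.2.le.trans (min_le_right _ _)⟩
  have hPg : (fun x : ℝ => P x) =ᵐ[volume.restrict (Ioo u v')] 0 := by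
    filter_upwards [ae_restrict_of_ae_restrict_of_subset hsub
      (ae_restrict_Ioc_of_ae_haarAddCircle hP u), ae_restrict_mem measurableSet_Ioo]
      with x hgP hx
    rw [← hgP, Pi.zero_apply, h x ⟨hx.1, hx.2.trans_le (min_le_left _ _)⟩]
  refine sum_smul_fourier_eq_zero_of_forall_Ioo (v := v') (lt_min huv (by linarith [hT.out])) ?_
  exact Measure.eqOn_open_of_ae_eq hPg isOpen_Ioo
    (P.continuous.comp continuous_quotient_mk').continuousOn continuousOn_const

theorem fourierCoeff_liftIoc_indicator {W : ℝ} {X : ℝ → ℂ} (hW : 0 ≤ W) (hWL : 2 * W ≤ T)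
    (n : ℤ) : fourierCoeff (liftIoc T (-(T / 2)) ((Ioc (-W) W).indicator X)) n
      = T⁻¹ • bandlimitedSignal W X (-n / T) := by
  have hsub : Ioc (-W) W ⊆ Ioc (-(T / 2)) (-(T / 2) + T) :=
    Ioc_subset_Ioc (by linarith) (by linarith)
  rw [fourierCoeff_eq_intervalIntegral _ n (-(T / 2)), one_div, bandlimitedSignal]
  congr 1
  rw [intervalIntegral.integral_of_le (by linarith [hT.out]),
    intervalIntegral.integral_of_le (by linarith)]
  calc ∫ x in Ioc (-(T / 2)) (-(T / 2) + T),
        fourier (-n) (x : AddCircle T) • liftIoc T (-(T / 2)) ((Ioc (-W) W).indicator X) x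
      = ∫ x in Ioc (-(T / 2)) (-(T / 2) + T),
        (Ioc (-W) W).indicator (fun x => fourier (-n) (x : AddCircle T) • X x) x := by
        refine setIntegral_congr_fun measurableSet_Ioc fun x hx => ?_
        rw [liftIoc_coe_apply hx]
        by_cases hxW : x ∈ Ioc (-W) W <;> simp [hxW]
    _ = ∫ x in Ioc (-W) W, fourier (-n) (x : AddCircle T) • X x := by
        rw [setIntegral_indicator measurableSet_Ioc, inter_eq_right.mpr hsub]
    _ = _ := by
        refine setIntegral_congr_fun measurableSet_Ioc fun x _ => ?_
        rw [fourier_coe_apply, smul_eq_mul, mul_comm]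
        push_cast
        ring_nf

end Circle

theorem bandlimitedSignal_eq_zero_of_eventually_samples_eq_zero {W Ts : ℝ} {X : ℝ → ℂ}
    (hW : 0 ≤ W) (hTs : 0 < Ts) (hNyq : 2 * W * Ts < 1)
    (hX : MemLp X 2 (volume.restrict (Ioc (-W) W)))
    (hsamples : ∀ᶠ n : ℤ in cofinite, bandlimitedSignal W X (n * Ts) = 0) (t : ℝ) :
    bandlimitedSignal W X t = 0 := by
  set L := Ts⁻¹
  have hL : 0 < L := inv_pos.mpr hTs
  have : Fact (0 < L) := ⟨hL⟩
  have hWL : W < L / 2 := by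
    have : W * 2 < 1 / Ts := (lt_div_iff₀ hTs).2 (by linarith)
    rw [one_div] at this
    linarith
  set g := liftIoc L (-(L / 2)) ((Ioc (-W) W).indicator X)
  have hsub : Ioc (-W) W ⊆ Ioc (-(L / 2)) (-(L / 2) + L) :=
    Ioc_subset_Ioc (by linarith) (by linarith)
  have hg : MemLp g 2 haarAddCircle :=
    (((memLp_indicator_iff_restrict measurableSet_Ioc).2 hX).restrict
      (Ioc (-(L / 2)) (-(L / 2) + L))).memLp_liftIoc.haarAddCircle
  have hfin : (fourierCoeff g).support.Finite := by
    refine (eventually_cofinite.1 hsamples |>.preimage neg_injective.injOn).subset fun n hn => ?_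
    rw [Function.mem_support, fourierCoeff_liftIoc_indicator hW (by linarith) n,
      div_inv_eq_mul] at hn
    simpa using right_ne_zero_of_smul hn
  have hgap : ∀ x ∈ Ioo W (L / 2), g x = 0 := fun x hx => by
    rw [show g x = _ from liftIoc_coe_apply ⟨by linarith [hx.1], by linarith [hx.2]⟩,
      indicator_of_notMem fun h => hx.1.not_ge h.2]
  have hX0 : X =ᵐ[volume.restrict (Ioc (-W) W)] 0 := by
    filter_upwards [ae_restrict_of_ae_restrict_of_subset hsub (ae_restrict_Ioc_of_ae_haarAddCircle
      (ae_eq_zero_of_finite_fourierCoeff_of_forall_Ioo hg hfin (by linarith) hgap) _),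
      ae_restrict_mem measurableSet_Ioc] with x hgx hx
    rwa [show g x = _ from liftIoc_coe_apply (hsub hx), indicator_of_mem hx] at hgx
  rw [bandlimitedSignal, intervalIntegral.integral_of_le (by linarith)]
  refine integral_eq_zero_of_ae ?_
  filter_upwards [hX0] with f hf
  simp [hf]

theorem perfect_recovery_from_modulo_samples_general
    (W E T₀ ρ Δ Ts : ℝ) (hW : 0 < W) (hρ : 0 < ρ)
    (hΔ : 0 < Δ) (hTs : 0 < Ts) (hNyq : Ts < 1 / (2 * W))
    (x y : ℝ → ℂ) (hx : x ∈ signalClass W E T₀ ρ) (hy : y ∈ signalClass W E T₀ ρ)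
    (hsamp : ∀ n : ℤ, cmodStar Δ (x (n * Ts)) = cmodStar Δ (y (n * Ts))) :
    ∀ t : ℝ, x t = y t := by
  obtain ⟨X, hX, hxX, -, hxdecay⟩ := hx
  obtain ⟨Y, hY, hyY, -, hydecay⟩ := hy
  have hband : ∀ {Z : ℝ → ℂ}, MemLp Z 2 volume → IntervalIntegrable Z volume (-W) W := fun hZ =>
    ((hZ.locallyIntegrable one_le_two).integrableOn_isCompact isCompact_uIcc).intervalIntegrable
  have hdiff : ∀ t, x t - y t = bandlimitedSignal W (X - Y) t := fun t => by
    rw [bandlimitedSignal_sub (hband hX) (hband hY), hxX, hyY, bandlimitedSignal,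
      bandlimitedSignal]
  have hdecay : Tendsto (fun t => x t - y t) (cocompact ℝ) (𝓝 0) := by
    simpa using (tendsto_cocompact_of_norm_le_rpow_neg hρ hxdecay).sub
      (tendsto_cocompact_of_norm_le_rpow_neg hρ hydecay)
  have hsamples : ∀ᶠ n : ℤ in cofinite, bandlimitedSignal W (X - Y) (n * Ts) = 0 := by
    filter_upwards [(hdecay.comp (tendsto_intCast_mul_cofinite_cocompact hTs.ne')).eventually
      (Metric.ball_mem_nhds 0 hΔ)] with n hn
    rw [← hdiff, sub_eq_zero]
    exact eq_of_cmodStar_eq_of_norm_sub_lt hΔ (hsamp n) (by simpa using hn)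
  have hNyq' : 2 * W * Ts < 1 := by
    rw [lt_div_iff₀ (by positivity)] at hNyq
    linarith
  intro t
  rw [← sub_eq_zero, hdiff]
  exact bandlimitedSignal_eq_zero_of_eventually_samples_eq_zero hW.le hTs hNyq'
    ((hX.sub hY).restrict _) hsamples t

/-- Above the Nyquist rate, a signal in `C_{W,E,T₀,ρ}` is uniquely determined by its
modulo-`Δ`-reduced samples. -/
theorem perfect_recovery_from_modulo_samples
    (W E T₀ ρ Δ Ts : ℝ) (hW : 0 < W) (hE : 0 < E) (hT₀ : 0 < T₀) (hρ : 0 < ρ)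
    (hΔ : 0 < Δ) (hTs : 0 < Ts) (hNyq : Ts < 1 / (2 * W))
    (x y : ℝ → ℂ) (hx : x ∈ signalClass W E T₀ ρ) (hy : y ∈ signalClass W E T₀ ρ)
    (hsamp : ∀ n : ℤ, cmodStar Δ (x (n * Ts)) = cmodStar Δ (y (n * Ts))) :
    ∀ t : ℝ, x t = y t :=
  perfect_recovery_from_modulo_samples_general W E T₀ ρ Δ Ts hW hρ hΔ hTs hNyq x y hx hy hsamp
end

section
/- Let Δ > 0 and let a, p ∈ ℝ satisfy |a − p| < Δ/2. Then a = p + [[a]* − p]*, where [·]* denotes reduction modulo Δ into [−Δ/2, Δ/2). That is, a sample a can be exactly recovered from its modulo-reduced value [a]* together with any predictor p whose prediction error has magnitude less than Δ/2. -/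
theorem modStar_eq_toIcoMod {Δ : ℝ} (hΔ : 0 < Δ) (x : ℝ) :
    modStar Δ x = toIcoMod hΔ (-(Δ / 2)) x := by
  rw [modStar, toIcoMod_eq_add_fract_mul, sub_neg_eq_add]
  ring

theorem modStar_modStar_sub {Δ : ℝ} (hΔ : 0 < Δ) (x y : ℝ) :
    modStar Δ (modStar Δ x - y) = modStar Δ (x - y) := by
  simp only [modStar_eq_toIcoMod hΔ, toIcoMod_eq_toIcoMod]
  exact ⟨toIcoDiv hΔ (-(Δ / 2)) x, by rw [← self_sub_toIcoMod]; ring⟩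

theorem modStar_eq_self {Δ x : ℝ} (hΔ : 0 < Δ) (hx : x ∈ Set.Ico (-(Δ / 2)) (Δ / 2)) :
    modStar Δ x = x := by
  rw [modStar_eq_toIcoMod hΔ, toIcoMod_eq_self]
  rwa [neg_add_eq_sub, sub_half]

/-- A sample `a` is exactly recovered from its modulo-reduced value `[a]*` and any predictor `p`
whose prediction error is smaller than `Δ/2` in magnitude. -/
theorem recovery_from_prediction
    (Δ a p : ℝ) (hΔ : 0 < Δ) (hpred : |a - p| < Δ / 2) :
    a = p + modStar Δ (modStar Δ a - p) := by
  have hwindow : a - p ∈ Set.Ico (-(Δ / 2)) (Δ / 2) :=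
    ⟨(abs_lt.mp hpred).1.le, (abs_lt.mp hpred).2⟩
  rw [modStar_modStar_sub hΔ, modStar_eq_self hΔ hwindow]
  ring
end
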